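/- arXiv:1805.10137 — 2 statements merged into one kernel-verified Lean document; each statement's English description precedes it below -/
import Mathlib

section
/- Let (gⁿ)_{n∈ℕ} be a sequence of nonnegative functions on (0,∞) with ∫₀^∞ (1+z) gⁿ(z) dz ≤ G for all n and some constant G > 0, and suppose gⁿ ⇀ g weakly in L¹(0,∞) for some g ∈ S⁺. Then for every a > 0, the truncated coagulation gain terms converge weakly: C₁ⁿ(gⁿ) ⇀ C₁(g) in L¹((0,a)) as n → ∞, where C₁ⁿ(gⁿ)(z) = ½∫₀^z E(z−z₁,z₁)Φₙ(z−z₁,z₁)gⁿ(z−z₁)gⁿ(z₁) dz₁ and C₁(g)(z) = ½∫₀^z E(z−z₁,z₁)Φ(z−z₁,z₁)g(z−z₁)g(z₁) dz₁. -/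
/-!
For `n ≥ a` the truncation in `Φₙ` is invisible on `(0, a)`, and the substitution
`(x, y) = (z - z₁, z₁)` writes `∫₀^a C₁(h) ψ` as `½ ∬ h(x) h(y) K(x, y) dx dy` with a bounded
measurable kernel `K` (`Φ` is bounded on the triangle `x + y < a` since `α, β ≥ 0`). For such a
quadratic form, `Wₙ(y) = ∫ gⁿ(x) K(x, y) dx → W(y)` pointwise by weak convergence, and
`∫ gⁿ (Wₙ - W) → 0`: the nonnegative `gⁿ` are tested against the fixed bounded envelope
`sup_{m ≥ N} |W_m - W|`, whose integral against `g` tends to `0` as `N → ∞` by dominated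
convergence.
-/

open MeasureTheory Set Filter

noncomputable section

/-- The collision kernel `Φ(z,z₁) = k₁ (z^α z₁^β + z₁^α z^β)`. -/
def Phi (k₁ α β : ℝ) (z z₁ : ℝ) : ℝ := k₁ * (z ^ α * z₁ ^ β + z₁ ^ α * z ^ β)

/-- The truncated kernel `Φₙ(z,z₁) = Φ(z,z₁) χ_{(0,n)}(z+z₁)`. -/
def PhiN (k₁ α β n : ℝ) (z z₁ : ℝ) : ℝ :=
  (Ioo (0:ℝ) n).indicator (fun _ => (1:ℝ)) (z + z₁) * Phi k₁ α β z z₁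

/-- Coagulation gain term `C₁(g)`. -/
def C1 (E Φ : ℝ → ℝ → ℝ) (g : ℝ → ℝ) (z : ℝ) : ℝ :=
  (1 / 2) * ∫ z₁ in Ioo (0:ℝ) z, E (z - z₁) z₁ * Φ (z - z₁) z₁ * g (z - z₁) * g z₁

/-- Collision loss term `B₃(g)`. -/
def B3 (Φ : ℝ → ℝ → ℝ) (g : ℝ → ℝ) (z : ℝ) : ℝ :=
  ∫ z₁ in Ioi (0:ℝ), Φ z z₁ * g z * g z₁

/-- Collisional breakage gain term `B₁(g)`. -/
def B1 (P : ℝ → ℝ → ℝ → ℝ) (E Φ : ℝ → ℝ → ℝ) (g : ℝ → ℝ) (z : ℝ) : ℝ :=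
  (1 / 2) * ∫ z₁ in Ioi z, ∫ z₂ in Ioo (0:ℝ) z₁,
    P z (z₁ - z₂) z₂ * (1 - E (z₁ - z₂) z₂) * Φ (z₁ - z₂) z₂ * g (z₁ - z₂) * g z₂

/-- Truncated collision loss term `B₃ⁿ(g)`. -/
def B3n (Φ : ℝ → ℝ → ℝ) (n : ℝ) (g : ℝ → ℝ) (z : ℝ) : ℝ :=
  ∫ z₁ in Ioo (0:ℝ) (n - z), Φ z z₁ * g z * g z₁

/-- Truncated collisional breakage gain term `B₁ⁿ(g)`. -/
def B1n (P : ℝ → ℝ → ℝ → ℝ) (E Φ : ℝ → ℝ → ℝ) (n : ℝ) (g : ℝ → ℝ) (z : ℝ) : ℝ :=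
  (1 / 2) * ∫ z₁ in Ioo z n, ∫ z₂ in Ioo (0:ℝ) z₁,
    P z (z₁ - z₂) z₂ * (1 - E (z₁ - z₂) z₂) * Φ (z₁ - z₂) z₂ * g (z₁ - z₂) * g z₂

/-- Membership in the space `S⁺`: nonnegative and integrable against `(1+z)dz` on `(0,∞)`. -/
def MemSplus (g : ℝ → ℝ) : Prop :=
  (∀ z, 0 ≤ g z) ∧ IntegrableOn (fun z => (1 + z) * g z) (Ioi 0) volume

/-- `g` is the nonnegative mass-conserving solution of the `n`-truncated
coagulation–collisional breakage system on `[0,T]`, extended by zero for `z ≥ n`. -/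
def IsTruncSol (k₁ α β : ℝ) (E : ℝ → ℝ → ℝ) (P : ℝ → ℝ → ℝ → ℝ)
    (T : ℝ) (g₀ : ℝ → ℝ) (n : ℕ) (g : ℝ → ℝ → ℝ) : Prop :=
  (∀ z t, 0 ≤ g z t) ∧
  (∀ z t, (n : ℝ) ≤ z → g z t = 0) ∧
  (∀ t ∈ Icc (0:ℝ) T, IntegrableOn (fun z => (1 + z) * g z t) (Ioi 0) volume) ∧
  (∀ z ∈ Ioo (0:ℝ) (n : ℝ), ∀ t ∈ Icc (0:ℝ) T,
    g z t = g₀ z + ∫ s in (0:ℝ)..t,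
      (C1 E (PhiN k₁ α β (n : ℝ)) (fun y => g y s) z
        - B3n (PhiN k₁ α β (n : ℝ)) (n : ℝ) (fun y => g y s) z
        + B1n P E (PhiN k₁ α β (n : ℝ)) (n : ℝ) (fun y => g y s) z)) ∧
  (∀ t ∈ Icc (0:ℝ) T, ∫ z in Ioo (0:ℝ) (n : ℝ), z * g z t = ∫ z in Ioo (0:ℝ) (n : ℝ), z * g₀ z)

/-- The power-law fragment distribution `P_ν`. -/
def Pnu (ν : ℝ) (z z₁ z₂ : ℝ) : ℝ :=
  if 0 < z ∧ z < z₁ + z₂ then (ν + 2) * z ^ ν / (z₁ + z₂) ^ (ν + 1) else 0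

open Topology Function

section WeakConvergence

variable {X : Type*} [MeasurableSpace X] {μ : Measure X}

def WeakTendsto (μ : Measure X) (f : ℕ → X → ℝ) (F : X → ℝ) : Prop :=
  ∀ φ : X → ℝ, Measurable φ → (∃ C, ∀ x, |φ x| ≤ C) →
    Tendsto (fun n => ∫ x, f n x * φ x ∂μ) atTop (𝓝 (∫ x, F x * φ x ∂μ))

theorem MeasureTheory.Integrable.mul_of_abs_le {f φ : X → ℝ} {M : ℝ} (hf : Integrable f μ)
    (hφ : Measurable φ) (hφM : ∀ x, |φ x| ≤ M) : Integrable (fun x => f x * φ x) μ :=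
  hf.mul_bdd hφ.aestronglyMeasurable (ae_of_all _ hφM)

theorem abs_integral_mul_le {f φ : X → ℝ} {M : ℝ} (hf : Integrable f μ)
    (hφM : ∀ x, |φ x| ≤ M) : |∫ x, f x * φ x ∂μ| ≤ M * ∫ x, |f x| ∂μ := by
  rw [← Real.norm_eq_abs, ← integral_const_mul]
  refine norm_integral_le_of_norm_le (hf.abs.const_mul M) (ae_of_all _ fun x => ?_)
  rw [Real.norm_eq_abs, abs_mul, mul_comm]
  exact mul_le_mul_of_nonneg_right (hφM x) (abs_nonneg _)

theorem measurable_integral_mul_kernel {Y : Type*} [MeasurableSpace Y] [SFinite μ]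
    {f : X → ℝ} {K : X → Y → ℝ} (hf : AEStronglyMeasurable f μ) (hK : Measurable (uncurry K)) :
    Measurable fun y => ∫ x, f x * K x y ∂μ := by
  have hmk : (fun y => ∫ x, f x * K x y ∂μ) = fun y => ∫ x, hf.mk f x * K x y ∂μ :=
    funext fun y => integral_congr_ae <| by filter_upwards [hf.ae_eq_mk] with x hx; rw [hx]
  rw [hmk]
  exact (StronglyMeasurable.integral_prod_left (f := fun x y => hf.mk f x * K x y)
    ((hf.stronglyMeasurable_mk.comp_measurable measurable_fst).mul
      hK.stronglyMeasurable)).measurable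

theorem tendsto_iSup_abs_add_of_tendsto_zero {u : ℕ → ℝ} (hu : Tendsto u atTop (𝓝 0)) :
    Tendsto (fun N => ⨆ m, |u (N + m)|) atTop (𝓝 0) := by
  refine Metric.tendsto_atTop.2 fun ε hε => ?_
  obtain ⟨N₀, hN₀⟩ := Metric.tendsto_atTop.1 hu (ε / 2) (half_pos hε)
  refine ⟨N₀, fun N hN => ?_⟩
  have : ⨆ m, |u (N + m)| ≤ ε / 2 := ciSup_le fun m => by
    simpa [Real.dist_eq] using (hN₀ (N + m) (hN.trans (Nat.le_add_right N m))).le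
  rw [Real.dist_eq, sub_zero, abs_of_nonneg (Real.iSup_nonneg fun m => abs_nonneg _)]
  linarith

variable {f : ℕ → X → ℝ} {F : X → ℝ}

theorem WeakTendsto.tendsto_integral_mul_of_tendsto_zero (hw : WeakTendsto μ f F)
    (hf0 : ∀ n x, 0 ≤ f n x) (hfi : ∀ n, Integrable (f n) μ) (hFi : Integrable F μ)
    {h : ℕ → X → ℝ} {M : ℝ} (hm : ∀ n, Measurable (h n)) (hM : ∀ n x, |h n x| ≤ M)
    (h0 : ∀ x, Tendsto (fun n => h n x) atTop (𝓝 0)) :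
    Tendsto (fun n => ∫ x, f n x * h n x ∂μ) atTop (𝓝 0) := by
  set env : ℕ → X → ℝ := fun N x => ⨆ m, |h (N + m) x|
  have env_nonneg : ∀ N x, 0 ≤ env N x := fun N x => Real.iSup_nonneg fun m => abs_nonneg _
  have env_le : ∀ N x, env N x ≤ M := fun N x => ciSup_le fun m => hM _ x
  have abs_env_le : ∀ N x, |env N x| ≤ M := fun N x =>
    (abs_of_nonneg (env_nonneg N x)).trans_le (env_le N x)
  have le_env : ∀ N n, N ≤ n → ∀ x, |h n x| ≤ env N x := by
    intro N n hn x
    obtain ⟨m, rfl⟩ := Nat.exists_eq_add_of_le hn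
    exact le_ciSup (f := fun m => |h (N + m) x|) ⟨M, by rintro _ ⟨k, rfl⟩; exact hM _ x⟩ m
  have env_meas : ∀ N, Measurable (env N) := fun N => Measurable.iSup fun m => (hm _).abs
  have env_integral : Tendsto (fun N => ∫ x, F x * env N x ∂μ) atTop (𝓝 0) := by
    simpa using tendsto_integral_of_dominated_convergence (f := fun _ => 0) (fun x => M * |F x|)
      (fun N => hFi.aestronglyMeasurable.mul (env_meas N).aestronglyMeasurable)
      (hFi.abs.const_mul M)
      (fun N => ae_of_all _ fun x => by
        rw [Pi.mul_apply, Real.norm_eq_abs, abs_mul, mul_comm]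
        exact mul_le_mul_of_nonneg_right (abs_env_le N x) (abs_nonneg _))
      (ae_of_all _ fun x => by
        simpa using (tendsto_iSup_abs_add_of_tendsto_zero (h0 x)).const_mul (F x))
  refine Metric.tendsto_nhds.2 fun ε hε => ?_
  obtain ⟨N, hN⟩ := Metric.tendsto_atTop.1 env_integral (ε / 2) (half_pos hε)
  specialize hN N le_rfl
  have hweakN := Metric.tendsto_nhds.1 (hw (env N) (env_meas N) ⟨M, abs_env_le N⟩)
    (ε / 2) (half_pos hε)
  filter_upwards [hweakN, eventually_ge_atTop N] with n hn hNn
  have hdom : |∫ x, f n x * h n x ∂μ| ≤ ∫ x, f n x * env N x ∂μ := by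
    rw [← Real.norm_eq_abs]
    refine norm_integral_le_of_norm_le ((hfi n).mul_of_abs_le (env_meas N) (abs_env_le N))
      (ae_of_all _ fun x => ?_)
    rw [Real.norm_eq_abs, abs_mul, abs_of_nonneg (hf0 n x)]
    exact mul_le_mul_of_nonneg_left (le_env N n hNn x) (hf0 n x)
  rw [Real.dist_eq] at hn hN ⊢
  rw [sub_zero] at hN ⊢
  linarith [abs_lt.1 hn, abs_lt.1 hN]

theorem WeakTendsto.tendsto_integral_mul_integral_mul_kernel [SFinite μ]
    (hw : WeakTendsto μ f F) (hf0 : ∀ n x, 0 ≤ f n x) (hfi : ∀ n, Integrable (f n) μ)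
    (hFi : Integrable F μ) {K : X → X → ℝ} {M : ℝ} (hKm : Measurable (uncurry K))
    (hKb : ∀ x y, |K x y| ≤ M) :
    Tendsto (fun n => ∫ y, f n y * ∫ x, f n x * K x y ∂μ ∂μ) atTop
      (𝓝 (∫ y, F y * ∫ x, F x * K x y ∂μ ∂μ)) := by
  set W : ℕ → X → ℝ := fun n y => ∫ x, f n x * K x y ∂μ
  set W' : X → ℝ := fun y => ∫ x, F x * K x y ∂μ
  obtain ⟨B, hB⟩ := (by simpa using hw 1 measurable_const ⟨1, by simp⟩ :
    Tendsto (fun n => ∫ x, f n x ∂μ) atTop (𝓝 (∫ x, F x ∂μ))).bddAbove_range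
  have hWm : ∀ n, Measurable (W n) := fun n =>
    measurable_integral_mul_kernel (hfi n).aestronglyMeasurable hKm
  have hW'm : Measurable W' := measurable_integral_mul_kernel hFi.aestronglyMeasurable hKm
  have hWb : ∀ n y, |W n y| ≤ M * B := by
    intro n y
    have hM : 0 ≤ M := (abs_nonneg _).trans (hKb y y)
    calc |W n y| ≤ M * ∫ x, |f n x| ∂μ := abs_integral_mul_le (hfi n) fun x => hKb x y
      _ = M * ∫ x, f n x ∂μ := by simp_rw [abs_of_nonneg (hf0 n _)]
      _ ≤ M * B := mul_le_mul_of_nonneg_left (hB (mem_range_self n)) hM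
  have hW'b : ∀ y, |W' y| ≤ M * ∫ x, |F x| ∂μ := fun y =>
    abs_integral_mul_le hFi fun x => hKb x y
  have hWt : ∀ y, Tendsto (fun n => W n y - W' y) atTop (𝓝 0) := fun y =>
    tendsto_sub_nhds_zero_iff.2 <| hw _ (hKm.comp (measurable_id.prodMk measurable_const))
      ⟨M, fun x => hKb x y⟩
  have hdiff := hw.tendsto_integral_mul_of_tendsto_zero hf0 hfi hFi
    (fun n => (hWm n).sub hW'm)
    (fun n y => (abs_sub _ _).trans (add_le_add (hWb n y) (hW'b y))) hWt
  convert hdiff.add (hw W' hW'm ⟨_, hW'b⟩) using 1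
  · funext n
    rw [← integral_add ((hfi n).mul_of_abs_le ((hWm n).sub hW'm)
      fun y => (abs_sub _ _).trans (add_le_add (hWb n y) (hW'b y)))
      ((hfi n).mul_of_abs_le hW'm hW'b)]
    simp only [Pi.sub_apply, mul_sub, sub_add_cancel, W]
  · rw [zero_add]

end WeakConvergence

section GainTerm

variable {E Φ : ℝ → ℝ → ℝ} {ψ h : ℝ → ℝ} {a : ℝ}

def gainKernel (E Φ : ℝ → ℝ → ℝ) (ψ : ℝ → ℝ) (a x y : ℝ) : ℝ :=
  if 0 < x ∧ 0 < y ∧ x + y < a then E x y * Φ x y * ψ (x + y) else 0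

theorem measurable_gainKernel (hE : Measurable (uncurry E)) (hΦ : Measurable (uncurry Φ))
    (hψ : Measurable ψ) : Measurable (uncurry (gainKernel E Φ ψ a)) := by
  refine Measurable.ite ?_ ((hE.mul hΦ).mul (hψ.comp (measurable_fst.add measurable_snd)))
    measurable_const
  exact (measurableSet_lt measurable_const measurable_fst).inter
    ((measurableSet_lt measurable_const measurable_snd).inter
      (measurableSet_lt (measurable_fst.add measurable_snd) measurable_const))

theorem abs_gainKernel_le {B C : ℝ} (hB : 0 ≤ B) (hE : ∀ x y, |E x y| ≤ 1)
    (hΦ : ∀ x y, 0 < x → 0 < y → x + y < a → |Φ x y| ≤ B) (hψ : ∀ z, |ψ z| ≤ C) (x y : ℝ) :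
    |gainKernel E Φ ψ a x y| ≤ B * C := by
  have hC : 0 ≤ C := (abs_nonneg _).trans (hψ 0)
  unfold gainKernel
  split_ifs with hxy
  · rw [abs_mul, abs_mul]
    calc |E x y| * |Φ x y| * |ψ (x + y)| ≤ 1 * B * C := by
          gcongr
          exacts [hE x y, hΦ x y hxy.1 hxy.2.1 hxy.2.2, hψ _]
      _ = B * C := by rw [one_mul]
  · simpa using mul_nonneg hB hC

theorem gainKernel_sub_self (y z : ℝ) :
    gainKernel E Φ ψ a (z - y) y =
      if 0 < y ∧ y < z ∧ z < a then E (z - y) y * Φ (z - y) y * ψ z else 0 := by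
  simp only [gainKernel, sub_pos, sub_add_cancel, and_left_comm (a := y < z)]

theorem integral_indicator_mul_gainKernel_sub (z : ℝ) :
    ∫ y, (Ioi 0).indicator h y * (Ioi 0).indicator h (z - y) * gainKernel E Φ ψ a (z - y) y =
      (Ioo 0 a).indicator (fun z => 2 * (C1 E Φ h z * ψ z)) z := by
  simp only [gainKernel_sub_self]
  by_cases hz : z ∈ Ioo 0 a
  · have hslice : ∀ y, (Ioi 0).indicator h y * (Ioi 0).indicator h (z - y) *
          (if 0 < y ∧ y < z ∧ z < a then E (z - y) y * Φ (z - y) y * ψ z else 0) =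
        (Ioo 0 z).indicator (fun y => E (z - y) y * Φ (z - y) y * h (z - y) * h y * ψ z) y := by
      intro y
      by_cases hy : y ∈ Ioo 0 z
      · rw [if_pos ⟨hy.1, hy.2, hz.2⟩, indicator_of_mem hy, indicator_of_mem (mem_Ioi.2 hy.1),
          indicator_of_mem (mem_Ioi.2 (sub_pos.2 hy.2))]
        ring
      · rw [if_neg fun hyz => hy ⟨hyz.1, hyz.2.1⟩, indicator_of_notMem hy, mul_zero]
    simp_rw [hslice]
    rw [integral_indicator measurableSet_Ioo, integral_mul_const, indicator_of_mem hz, C1]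
    ring
  · rw [indicator_of_notMem hz]
    simp_rw [if_neg fun hyz : 0 < _ ∧ _ < z ∧ z < a => hz ⟨hyz.1.trans hyz.2.1, hyz.2.2⟩,
      mul_zero, integral_zero]

theorem setIntegral_C1_mul_eq {M : ℝ} (hh : IntegrableOn h (Ioi 0))
    (hK : Measurable (uncurry (gainKernel E Φ ψ a)))
    (hKb : ∀ x y, |gainKernel E Φ ψ a x y| ≤ M) :
    ∫ z in Ioo 0 a, C1 E Φ h z * ψ z =
      (1 / 2) * ∫ y in Ioi 0, h y * ∫ x in Ioi 0, h x * gainKernel E Φ ψ a x y := by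
  set K := gainKernel E Φ ψ a
  set h₀ := (Ioi (0 : ℝ)).indicator h
  have hh₀ : Integrable h₀ := (integrable_indicator_iff measurableSet_Ioi).2 hh
  have restrict_eq : ∀ φ : ℝ → ℝ, ∫ x in Ioi 0, h x * φ x = ∫ x, h₀ x * φ x := fun φ => by
    rw [← integral_indicator measurableSet_Ioi]
    simp only [h₀, indicator_mul_left]
  have hint : Integrable (uncurry fun z y => h₀ y * h₀ (z - y) * K (z - y) y)
      ((volume : Measure ℝ).prod volume) :=
    (hh₀.convolution_integrand (ContinuousLinearMap.mul ℝ ℝ) hh₀).mul_bdd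
      (hK.comp ((measurable_fst.sub measurable_snd).prodMk measurable_snd)).aestronglyMeasurable
      (ae_of_all _ fun p => hKb _ _)
  calc ∫ z in Ioo 0 a, C1 E Φ h z * ψ z
      = (1 / 2) * ∫ z, ∫ y, h₀ y * h₀ (z - y) * K (z - y) y := by
        simp_rw [h₀, K, integral_indicator_mul_gainKernel_sub]
        rw [integral_indicator measurableSet_Ioo, integral_const_mul]
        ring
    _ = (1 / 2) * ∫ y, h₀ y * ∫ x, h₀ x * K x y := by
        rw [integral_integral_swap hint]
        congr 1
        refine integral_congr_ae (ae_of_all _ fun y => ?_)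
        dsimp only
        rw [← integral_sub_right_eq_self (fun x => h₀ x * K x y) y, ← integral_const_mul]
        simp only [mul_assoc]
    _ = _ := by simp only [restrict_eq]

end GainTerm

theorem measurable_Phi (k₁ α β : ℝ) : Measurable (uncurry (Phi k₁ α β)) := by
  unfold Phi
  fun_prop

theorem abs_Phi_le {k₁ α β x y c : ℝ} (hα : 0 ≤ α) (hβ : 0 ≤ β) (hx : 0 ≤ x) (hy : 0 ≤ y)
    (hxc : x ≤ c) (hyc : y ≤ c) : |Phi k₁ α β x y| ≤ |k₁| * (2 * (c ^ α * c ^ β)) := by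
  have hc : 0 ≤ c := hx.trans hxc
  have h₁ : x ^ α * y ^ β ≤ c ^ α * c ^ β := by gcongr
  have h₂ : y ^ α * x ^ β ≤ c ^ α * c ^ β := by gcongr
  have hsum : 0 ≤ x ^ α * y ^ β + y ^ α * x ^ β := by
    have := Real.rpow_nonneg hx α; have := Real.rpow_nonneg hx β
    have := Real.rpow_nonneg hy α; have := Real.rpow_nonneg hy β
    positivity
  rw [Phi, abs_mul, abs_of_nonneg hsum]
  gcongr
  linarith

theorem C1_PhiN_eq_C1_Phi {E : ℝ → ℝ → ℝ} {h : ℝ → ℝ} {k₁ α β n z : ℝ} (hz : z ∈ Ioo 0 n) :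
    C1 E (PhiN k₁ α β n) h z = C1 E (Phi k₁ α β) h z := by
  simp only [C1, PhiN, sub_add_cancel, indicator_of_mem hz, one_mul]

theorem MeasureTheory.IntegrableOn.of_one_add_mul {f : ℝ → ℝ}
    (hf : IntegrableOn (fun z => (1 + z) * f z) (Ioi 0)) : IntegrableOn f (Ioi 0) := by
  refine (hf.bdd_mul (c := 1) (by fun_prop : Measurable fun z : ℝ => (1 + z)⁻¹).aestronglyMeasurable
    ?_).congr ?_
  all_goals filter_upwards [ae_restrict_mem measurableSet_Ioi] with z (hz : 0 < z)
  · rw [Real.norm_eq_abs, abs_inv, abs_of_pos (by linarith)]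
    exact inv_le_one_of_one_le₀ (by linarith)
  · rw [inv_mul_cancel_left₀ (by linarith)]

theorem C1n_weak_convergence_general
    (k₁ α β : ℝ) (E : ℝ → ℝ → ℝ) (g : ℕ → ℝ → ℝ) (glim : ℝ → ℝ)
    (hα : 0 < α) (hαβ : α ≤ β)
    (hEmeas : Measurable (Function.uncurry E))
    (hEnn : ∀ z z₁, 0 ≤ E z z₁) (hEle : ∀ z z₁, E z z₁ ≤ 1)
    (hgnn : ∀ n z, 0 ≤ g n z)
    (hgint : ∀ n, IntegrableOn (fun z => (1 + z) * g n z) (Ioi 0) volume)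
    (hglim : MemSplus glim)
    (hweak : ∀ ψ : ℝ → ℝ, Measurable ψ → (∃ C, ∀ z, |ψ z| ≤ C) →
      Tendsto (fun n => ∫ z in Ioi (0:ℝ), g n z * ψ z) atTop
        (nhds (∫ z in Ioi (0:ℝ), glim z * ψ z))) :
    ∀ a > (0:ℝ), ∀ ψ : ℝ → ℝ, Measurable ψ → (∃ C, ∀ z, |ψ z| ≤ C) →
      Tendsto (fun n : ℕ => ∫ z in Ioo (0:ℝ) a, C1 E (PhiN k₁ α β (n : ℝ)) (g n) z * ψ z)
        atTop (nhds (∫ z in Ioo (0:ℝ) a, C1 E (Phi k₁ α β) glim z * ψ z)) := by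
  intro a ha ψ hψ ⟨C, hC⟩
  have hKm := measurable_gainKernel (a := a) hEmeas (measurable_Phi k₁ α β) hψ
  have hB : 0 ≤ |k₁| * (2 * (a ^ α * a ^ β)) := by
    have := Real.rpow_nonneg ha.le α; have := Real.rpow_nonneg ha.le β
    positivity
  have hE : ∀ x y, |E x y| ≤ 1 := fun x y =>
    abs_le.2 ⟨(neg_nonpos.2 zero_le_one).trans (hEnn x y), hEle x y⟩
  have hKb := abs_gainKernel_le (a := a) hB hE
    (fun x y hx hy hxy => abs_Phi_le (k₁ := k₁) hα.le (hα.trans_le hαβ).le hx.le hy.le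
      (by linarith) (by linarith)) hC
  have hgi : ∀ n, IntegrableOn (g n) (Ioi 0) := fun n => (hgint n).of_one_add_mul
  have hlim := WeakTendsto.tendsto_integral_mul_integral_mul_kernel hweak hgnn hgi
    hglim.2.of_one_add_mul hKm hKb
  rw [setIntegral_C1_mul_eq hglim.2.of_one_add_mul hKm hKb]
  refine (hlim.const_mul (1 / 2)).congr' ?_
  filter_upwards [eventually_ge_atTop ⌈a⌉₊] with n hn
  have han : a ≤ n := Nat.ceil_le.1 hn
  rw [← setIntegral_C1_mul_eq (hgi n) hKm hKb]
  exact setIntegral_congr_fun measurableSet_Ioo fun z hz => by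
    rw [C1_PhiN_eq_C1_Phi ⟨hz.1, hz.2.trans_le han⟩]

/-- Weak `L¹((0,a))` convergence of the truncated coagulation gain terms. -/
theorem C1n_weak_convergence
    (k₁ α β G : ℝ) (E : ℝ → ℝ → ℝ) (g : ℕ → ℝ → ℝ) (glim : ℝ → ℝ)
    (hk₁ : 0 ≤ k₁) (hα : 0 < α) (hαβ : α ≤ β) (hβ : β < 1) (hG : 0 < G)
    (hEmeas : Measurable (Function.uncurry E))
    (hEsymm : ∀ z z₁, E z z₁ = E z₁ z)
    (hEnn : ∀ z z₁, 0 ≤ E z z₁) (hEle : ∀ z z₁, E z z₁ ≤ 1)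
    (hgnn : ∀ n z, 0 ≤ g n z)
    (hgmeas : ∀ n, Measurable (g n))
    (hgint : ∀ n, IntegrableOn (fun z => (1 + z) * g n z) (Ioi 0) volume)
    (hgbd : ∀ n, (∫ z in Ioi (0:ℝ), (1 + z) * g n z) ≤ G)
    (hglim : MemSplus glim)
    (hweak : ∀ ψ : ℝ → ℝ, Measurable ψ → (∃ C, ∀ z, |ψ z| ≤ C) →
      Tendsto (fun n => ∫ z in Ioi (0:ℝ), g n z * ψ z) atTop
        (nhds (∫ z in Ioi (0:ℝ), glim z * ψ z))) :
    ∀ a > (0:ℝ), ∀ ψ : ℝ → ℝ, Measurable ψ → (∃ C, ∀ z, |ψ z| ≤ C) →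
      Tendsto (fun n : ℕ => ∫ z in Ioo (0:ℝ) a, C1 E (PhiN k₁ α β (n : ℝ)) (g n) z * ψ z)
        atTop (nhds (∫ z in Ioo (0:ℝ) a, C1 E (Phi k₁ α β) glim z * ψ z)) :=
  C1n_weak_convergence_general k₁ α β E g glim hα hαβ hEmeas hEnn hEle hgnn hgint hglim hweak
end
end

section
/- Let ν ≤ 0 and 0 < α < 1 satisfy ν − α > −1, and let P_ν(z|z₁;z₂) = (ν+2) z^ν / (z₁+z₂)^{ν+1} for 0 < z < z₁+z₂, zero otherwise. Then for every W > 0, every z₁ ∈ (0,W), every z₂ ∈ (0,z₁), and every measurable set U ⊆ (0,1): ∫₀^{z₁} χ_U(z) P_ν(z|z₁−z₂;z₂) dz ≤ (ν+2) ((1−α)/(ν+1−α))^{1−α} |U|^α z₁^{−α}, where |U| is the Lebesgue measure of U. In particular P_ν satisfies hypothesis (Γ₄) with Ω₁(δ) = (ν+2)((1−α)/(ν+1−α))^{1−α} δ^α. -/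
open MeasureTheory Set Filter

noncomputable section

/-!
On `(0, z₁)` the kernel is `(ν+2) z^ν / z₁^{ν+1}`. Since `z ↦ z^ν` is nonincreasing for `ν ≤ 0`,
among sets of measure `m` the integral of `z^ν` is largest on `(0, m)` (bathtub principle), which
gives `m^{ν+1}/(ν+1)` with `m = |(0,z₁) ∩ U| ≤ min(|U|, z₁)`. Splitting `m^{ν+1} ≤ |U|^α z₁^{ν+1-α}`
and comparing `1/(ν+1)` with the constant by the weighted AM–GM inequality finishes the proof.
-/

open Real

theorem setIntegral_le_setIntegral_Ioo_measureReal_of_antitoneOn {f : ℝ → ℝ}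
    (hf : AntitoneOn f (Ioi 0)) {A : Set ℝ} (hA : MeasurableSet A) (hA0 : A ⊆ Ioi 0)
    (hAfin : volume A ≠ ⊤) (hfA : IntegrableOn f A)
    (hfI : IntegrableOn f (Ioo 0 (volume.real A))) :
    ∫ z in A, f z ≤ ∫ z in Ioo 0 (volume.real A), f z := by
  rcases (measureReal_nonneg (μ := volume) (s := A)).eq_or_lt with hA_null | hm
  · rw [← hA_null, Measure.restrict_eq_zero.2 ((measureReal_eq_zero_iff hAfin).1 hA_null.symm)]
    simp
  set m := volume.real A
  set I := Ioo (0 : ℝ) m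
  have hvol : volume A = volume I := by
    rw [Real.volume_Ioo, sub_zero, ofReal_measureReal hAfin]
  -- `A \ I` lies above `m` and `I \ A` below it, and the two have the same measure.
  have hsymm : volume.real (A \ I) = volume.real (I \ A) := by
    rw [measureReal_def, measureReal_def, measure_sdiff_symm hA.nullMeasurableSet
      measurableSet_Ioo.nullMeasurableSet hvol (measure_ne_top_of_subset inter_subset_left hAfin)]
  have hout : ∫ z in A \ I, f z ≤ f m * volume.real (A \ I) := calc
    ∫ z in A \ I, f z ≤ ∫ _ in A \ I, f m :=
      setIntegral_mono_on (hfA.mono_set sdiff_subset)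
        (integrableOn_const (measure_ne_top_of_subset sdiff_subset hAfin))
        (hA.diff measurableSet_Ioo)
        fun z hz => hf hm (hA0 hz.1) (not_lt.1 fun hzm => hz.2 ⟨hA0 hz.1, hzm⟩)
    _ = f m * volume.real (A \ I) := by rw [setIntegral_const, smul_eq_mul, mul_comm]
  have hin : f m * volume.real (I \ A) ≤ ∫ z in I \ A, f z :=
    setIntegral_ge_of_const_le_real (measurableSet_Ioo.diff hA)
      (measure_ne_top_of_subset sdiff_subset (hvol ▸ hAfin))
      (fun z hz => hf hz.1.1 hm hz.1.2.le) (hfI.mono_set sdiff_subset)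
  rw [← integral_inter_add_sdiff (s := A) (t := I) measurableSet_Ioo hfA,
    ← integral_inter_add_sdiff (s := I) hA hfI, inter_comm I A]
  linarith [hsymm ▸ hout]

theorem integral_Ioo_zero_rpow {ν m : ℝ} (hν : -1 < ν) (hm : 0 ≤ m) :
    ∫ z in Ioo 0 m, z ^ ν = m ^ (ν + 1) / (ν + 1) := by
  rw [← integral_Ioc_eq_integral_Ioo, ← intervalIntegral.integral_of_le hm,
    integral_rpow (Or.inl hν), zero_rpow (by linarith), sub_zero]

theorem setIntegral_rpow_le_of_subset_Ioo {ν a : ℝ} (hν0 : ν ≤ 0) (hν1 : -1 < ν) {A : Set ℝ}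
    (hA : MeasurableSet A) (hAa : A ⊆ Ioo 0 a) :
    ∫ z in A, z ^ ν ≤ volume.real A ^ (ν + 1) / (ν + 1) := by
  have hint (b : ℝ) : IntegrableOn (fun z : ℝ => z ^ ν) (Ioo 0 b) :=
    (intervalIntegral.intervalIntegrable_rpow' hν1).1.mono_set Ioo_subset_Ioc_self
  calc ∫ z in A, z ^ ν ≤ ∫ z in Ioo 0 (volume.real A), z ^ ν :=
        setIntegral_le_setIntegral_Ioo_measureReal_of_antitoneOn
          (antitoneOn_rpow_Ioi_of_exponent_nonpos hν0) hA (hAa.trans Ioo_subset_Ioi_self)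
          (measure_ne_top_of_subset hAa measure_Ioo_lt_top.ne) ((hint a).mono_set hAa) (hint _)
    _ = volume.real A ^ (ν + 1) / (ν + 1) := integral_Ioo_zero_rpow hν1 measureReal_nonneg

theorem inv_le_rpow_one_sub_div_sub {α s : ℝ} (hα0 : 0 ≤ α) (hα1 : α < 1) (hαs : α < s) :
    s⁻¹ ≤ ((1 - α) / (s - α)) ^ (1 - α) := by
  set y := (s - α) / (1 - α)
  have hy : 0 < y := div_pos (by linarith) (by linarith)
  have hamgm : y ^ (1 - α) ≤ s := by
    have := geom_mean_le_arith_mean2_weighted (sub_nonneg.2 hα1.le) hα0 hy.le zero_le_one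
      (by ring)
    rw [one_rpow, mul_one, mul_one] at this
    calc y ^ (1 - α) ≤ (1 - α) * y + α := this
      _ = s := by simp only [y]; field_simp [(sub_pos.2 hα1).ne']; ring
  rw [← inv_div, inv_rpow hy.le]
  exact inv_anti₀ (rpow_pos_of_pos hy _) hamgm

theorem rpow_le_rpow_mul_rpow_sub {m u a α s : ℝ} (hm : 0 ≤ m) (hmu : m ≤ u) (hma : m ≤ a)
    (hα : 0 ≤ α) (hαs : α ≤ s) : m ^ s ≤ u ^ α * a ^ (s - α) := calc
  m ^ s = m ^ α * m ^ (s - α) := by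
    rw [← rpow_add_of_nonneg hm hα (sub_nonneg.2 hαs), add_sub_cancel]
  _ ≤ u ^ α * a ^ (s - α) := by
    gcongr
    exact rpow_nonneg (hm.trans hmu) _

theorem Pnu_sub_add_of_mem_Ioo {ν z a : ℝ} (b : ℝ) (hz : z ∈ Ioo 0 a) :
    Pnu ν z (a - b) b = (ν + 2) * z ^ ν / a ^ (ν + 1) := by
  simp [Pnu, hz.1, hz.2]

theorem setIntegral_indicator_mul_Pnu (ν a b : ℝ) {U : Set ℝ} (hU : MeasurableSet U) :
    ∫ z in Ioo 0 a, U.indicator (fun _ => (1 : ℝ)) z * Pnu ν z (a - b) b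
      = (ν + 2) / a ^ (ν + 1) * ∫ z in Ioo 0 a ∩ U, z ^ ν := by
  have hcongr : EqOn (fun z => U.indicator (fun _ => (1 : ℝ)) z * Pnu ν z (a - b) b)
      (U.indicator fun z => (ν + 2) / a ^ (ν + 1) * z ^ ν) (Ioo 0 a) := by
    intro z hz
    by_cases hzU : z ∈ U
    · simp [hzU, Pnu_sub_add_of_mem_Ioo b hz, mul_div_right_comm]
    · simp [hzU]
  rw [setIntegral_congr_fun measurableSet_Ioo hcongr, setIntegral_indicator hU,
    integral_const_mul]

theorem Pnu_satisfies_Gamma4_general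
    (ν α : ℝ) (hν : ν ≤ 0) (hα0 : 0 < α) (hνα : -1 < ν - α)
    (W : ℝ) (z₁ : ℝ) (hz₁ : z₁ ∈ Ioo (0:ℝ) W)
    (z₂ : ℝ)
    (U : Set ℝ) (hU : MeasurableSet U) (hU1 : U ⊆ Ioo 0 1) :
    (∫ z in Ioo (0:ℝ) z₁, U.indicator (fun _ => (1:ℝ)) z * Pnu ν z (z₁ - z₂) z₂)
      ≤ (ν + 2) * ((1 - α) / (ν + 1 - α)) ^ (1 - α) * (volume U).toReal ^ α * z₁ ^ (-α) := by
  have hz₁0 : 0 < z₁ := hz₁.1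
  set A := Ioo 0 z₁ ∩ U
  have hmU : volume.real A ≤ volume.real U :=
    measureReal_mono inter_subset_right (measure_ne_top_of_subset hU1 measure_Ioo_lt_top.ne)
  have hmz : volume.real A ≤ z₁ := by
    simpa [volume_real_Ioo_of_le hz₁0.le] using
      measureReal_mono (inter_subset_left : A ⊆ Ioo 0 z₁) (measure_Ioo_lt_top (μ := volume)).ne
  have hc : 0 ≤ (ν + 2) / z₁ ^ (ν + 1) := div_nonneg (by linarith) (by positivity)
  rw [setIntegral_indicator_mul_Pnu ν z₁ z₂ hU]
  calc (ν + 2) / z₁ ^ (ν + 1) * ∫ z in A, z ^ ν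
      ≤ (ν + 2) / z₁ ^ (ν + 1) * (volume.real A ^ (ν + 1) * (ν + 1)⁻¹) := by
        rw [← div_eq_mul_inv]
        exact mul_le_mul_of_nonneg_left (setIntegral_rpow_le_of_subset_Ioo hν (by linarith)
          (measurableSet_Ioo.inter hU) inter_subset_left) hc
    _ ≤ (ν + 2) / z₁ ^ (ν + 1) * (volume.real U ^ α * z₁ ^ (ν + 1 - α)
          * ((1 - α) / (ν + 1 - α)) ^ (1 - α)) := by
        refine mul_le_mul_of_nonneg_left (mul_le_mul ?_ ?_ (inv_nonneg.2 (by linarith))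
          (by positivity)) hc
        · exact rpow_le_rpow_mul_rpow_sub measureReal_nonneg hmU hmz hα0.le (by linarith)
        · exact inv_le_rpow_one_sub_div_sub hα0.le (by linarith) (by linarith)
    _ = (ν + 2) * ((1 - α) / (ν + 1 - α)) ^ (1 - α) * (volume U).toReal ^ α * z₁ ^ (-α) := by
        rw [rpow_sub hz₁0, rpow_neg hz₁0.le, measureReal_def]
        field_simp

/-- The power-law fragment distribution `P_ν` satisfies hypothesis (Γ₄)
with `Ω₁(δ) = (ν+2)((1−α)/(ν+1−α))^{1−α} δ^α`. -/
theorem Pnu_satisfies_Gamma4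
    (ν α : ℝ) (hν : ν ≤ 0) (hα0 : 0 < α) (hα1 : α < 1) (hνα : -1 < ν - α)
    (W : ℝ) (hW : 0 < W) (z₁ : ℝ) (hz₁ : z₁ ∈ Ioo (0:ℝ) W)
    (z₂ : ℝ) (hz₂ : z₂ ∈ Ioo (0:ℝ) z₁)
    (U : Set ℝ) (hU : MeasurableSet U) (hU1 : U ⊆ Ioo 0 1) :
    (∫ z in Ioo (0:ℝ) z₁, U.indicator (fun _ => (1:ℝ)) z * Pnu ν z (z₁ - z₂) z₂)
      ≤ (ν + 2) * ((1 - α) / (ν + 1 - α)) ^ (1 - α) * (volume U).toReal ^ α * z₁ ^ (-α) :=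
  Pnu_satisfies_Gamma4_general ν α hν hα0 hνα W z₁ hz₁ z₂ U hU hU1
end
end
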